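/- Fix real numbers L₁ ≥ 1 and q ∈ (0,1) with L₁·ln(1/q) ≥ 0, and suppose exp(-(L₁/4)·ln(1/q)) ≤ exp(-ln(1+2/δ)) for δ ∈ (0,1]. Then the double sum ∑_{r=1}^∞ ∑_{k=0}^{r-1} exp(-(r·2^k·L₁/4)·ln(1/q)) ≤ δ. -/

import Mathlib

/-!
With `x = exp (-(L₁ / 4) * log (1 / q))` the `(r, k)` term is `x ^ ((r + 1) * 2 ^ k)`, which is at
most `(x ^ (r + 1)) ^ (k + 1)` because `2 ^ k ≥ k + 1`. Two geometric series then bound the double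
sum by `x / (1 - x) ^ 2`, and the hypothesis says `x ≤ δ / (δ + 2)`, i.e. `1 - x ≥ 2 / (δ + 2)`,
so `x / (1 - x) ^ 2 ≤ δ (δ + 2) / 4 ≤ δ`.
-/

open Finset

lemma pow_mul_two_pow_le_pow_pow_succ {x : ℝ} (hx0 : 0 ≤ x) (hx1 : x ≤ 1) (n k : ℕ) :
    x ^ (n * 2 ^ k) ≤ (x ^ n) ^ (k + 1) := by
  rw [← pow_mul]
  exact pow_le_pow_of_le_one hx0 hx1 (Nat.mul_le_mul_left n Nat.lt_two_pow_self)

lemma sum_range_pow_mul_two_pow_le {x : ℝ} (hx0 : 0 ≤ x) (hx1 : x < 1) (n : ℕ) (hn : n ≠ 0)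
    (m : ℕ) : ∑ k ∈ range m, x ^ (n * 2 ^ k) ≤ x ^ n / (1 - x) := by
  set y := x ^ n
  have hy0 : 0 ≤ y := by positivity
  have hy1 : y < 1 := (pow_le_of_le_one hx0 hx1.le hn).trans_lt hx1
  calc ∑ k ∈ range m, x ^ (n * 2 ^ k)
      ≤ ∑ k ∈ range m, y * y ^ k := sum_le_sum fun k _ =>
        (pow_mul_two_pow_le_pow_pow_succ hx0 hx1.le n k).trans_eq (pow_succ' y k)
    _ = y * ∑ k ∈ range m, y ^ k := (mul_sum _ _ _).symm
    _ ≤ y * (1 - y)⁻¹ := by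
        rw [← tsum_geometric_of_lt_one hy0 hy1]
        gcongr
        exact (summable_geometric_of_lt_one hy0 hy1).sum_le_tsum _ fun k _ => by positivity
    _ ≤ y / (1 - x) := by
        rw [div_eq_mul_inv]
        gcongr
        exact pow_le_of_le_one hx0 hx1.le hn

lemma tsum_sum_range_pow_mul_two_pow_le {x : ℝ} (hx0 : 0 ≤ x) (hx1 : x < 1) (N : ℕ → ℕ) :
    ∑' r : ℕ, ∑ k ∈ range (N r), x ^ ((r + 1) * 2 ^ k) ≤ x / (1 - x) ^ 2 := by
  have hgeom : HasSum (fun r : ℕ => x ^ (r + 1) / (1 - x)) (x / (1 - x) ^ 2) := by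
    have h := ((hasSum_geometric_of_lt_one hx0 hx1).mul_left x).div_const (1 - x)
    simpa only [← pow_succ', ← div_eq_mul_inv, div_div, ← sq] using h
  have hle (r : ℕ) : ∑ k ∈ range (N r), x ^ ((r + 1) * 2 ^ k) ≤ x ^ (r + 1) / (1 - x) :=
    sum_range_pow_mul_two_pow_le hx0 hx1 _ r.succ_ne_zero _
  have hsum : Summable fun r : ℕ => ∑ k ∈ range (N r), x ^ ((r + 1) * 2 ^ k) :=
    hgeom.summable.of_nonneg_of_le (fun r => sum_nonneg fun k _ => by positivity) hle
  exact (hsum.tsum_le_tsum hle hgeom.summable).trans_eq hgeom.tsum_eq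

lemma div_one_sub_sq_le_of_le_div_add_two {x δ : ℝ} (hδ0 : 0 < δ) (hδ2 : δ ≤ 2) (hx0 : 0 ≤ x)
    (hx : x ≤ δ / (δ + 2)) : x / (1 - x) ^ 2 ≤ δ := by
  rw [le_div_iff₀ (by positivity)] at hx
  have h1x : 2 ≤ (1 - x) * (δ + 2) := by linarith
  have hpos : 0 < 1 - x := by nlinarith
  rw [div_le_iff₀ (by positivity)]
  nlinarith

theorem brakebooster_double_sum_general (L₁ q δ : ℝ)
    (hδ0 : 0 < δ) (hδ1 : δ ≤ 1)
    (hkey : Real.exp (-(L₁ / 4) * Real.log (1 / q)) ≤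
      Real.exp (-Real.log (1 + 2 / δ))) :
    ∑' r : ℕ, ∑ k ∈ Finset.range (r + 1),
        Real.exp (-(((r : ℝ) + 1) * 2 ^ k * L₁ / 4) * Real.log (1 / q)) ≤ δ := by
  set x := Real.exp (-(L₁ / 4) * Real.log (1 / q))
  have hx : x ≤ δ / (δ + 2) := by
    rwa [Real.exp_neg, Real.exp_log (by positivity), inv_eq_one_div, one_add_div hδ0.ne',
      one_div_div] at hkey
  have hx1 : x < 1 := hx.trans_lt <| (div_lt_one (by positivity)).2 (by linarith)
  have hterm (r k : ℕ) :
      Real.exp (-(((r : ℝ) + 1) * 2 ^ k * L₁ / 4) * Real.log (1 / q)) = x ^ ((r + 1) * 2 ^ k) := by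
    rw [← Real.exp_nat_mul]
    push_cast
    ring_nf
  simp only [hterm]
  exact (tsum_sum_range_pow_mul_two_pow_le (Real.exp_nonneg _) hx1 _).trans
    (div_one_sub_sq_le_of_le_div_add_two hδ0 (by linarith) (Real.exp_nonneg _) hx)

theorem brakebooster_double_sum (L₁ q δ : ℝ) (hL : 1 ≤ L₁)
    (hq0 : 0 < q) (hq1 : q < 1)
    (hnn : 0 ≤ L₁ * Real.log (1 / q))
    (hδ0 : 0 < δ) (hδ1 : δ ≤ 1)
    (hkey : Real.exp (-(L₁ / 4) * Real.log (1 / q)) ≤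
      Real.exp (-Real.log (1 + 2 / δ))) :
    ∑' r : ℕ, ∑ k ∈ Finset.range (r + 1),
        Real.exp (-(((r : ℝ) + 1) * 2 ^ k * L₁ / 4) * Real.log (1 / q)) ≤ δ :=
  brakebooster_double_sum_general L₁ q δ hδ0 hδ1 hkey
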